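/- arXiv:1707.07174 — 4 statements merged into one kernel-verified Lean document; each statement's English description precedes it below -/
import Mathlib

section
/- Let 1 ≤ p ≤ n be integers and let M = (t_{ij}) be a random complex p×n matrix whose entries are independent random variables with E(t_{ij}) = 0 and E(|t_{ij}|²) = 1; set W := M*M. Then for every z ∈ ℂ, E(det(z·I_n − W)) = (−1)^p · p! · z^{n-p} · L_p^{(n-p)}(z). -/
open MeasureTheory ProbabilityTheory Matrix
open scoped ENNReal

/-- Generalized Laguerre polynomial `L_p^{(α)}`. -/
noncomputable def laguerre (α : ℝ) (p : ℕ) (z : ℂ) : ℂ :=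
  ∑ k ∈ Finset.range (p + 1),
    (((descPochhammer ℝ (p - k)).eval ((p : ℝ) + α) / (p - k).factorial : ℝ) : ℂ) *
      (-z) ^ k / (k.factorial : ℂ)

/-!
Expand `det (z • 1 - Mᴴ * M)` by Leibniz and multiply out every entry
`z • δ (σ a) a - ∑ i, conj (M i (σ a)) * M i a`: a term is indexed by `σ` and by a choice `g a`,
for every column `a`, of either the diagonal summand or a row `i`. Its random part is a product of
the entries of `M` on the graph of `g` and of the conjugated entries on the graph of `g ∘ σ⁻¹`,
each entry occurring at most once in each product, so by independence, `E M = 0` and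
`E |M|² = 1` its expectation is `1` when the two graphs agree and `0` otherwise.
The surviving permutations are those preserving `g` and fixing its diagonal choices; their signs
cancel in pairs (via a transposition in that stabiliser) unless `g` is injective on the columns
sent to rows, where only `σ = 1` is left. Counting these partial injections by the size `k` of
their domain gives `∑ k, C(n, k) p!/(p-k)! (-1)^k z^(n-k)`, which is the Laguerre expression
after the substitution `k ↦ p - k`.
-/

open Finset Equiv

theorem prod_star_mul_prod_eq_prod {ι M : Type*} [Fintype ι] [DecidableEq ι] [CommMonoid M]
    [Star M] (s t : Finset ι) (x : ι → M) :
    (∏ i ∈ s, star (x i)) * ∏ i ∈ t, x i =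
      ∏ i, (if i ∈ s then star (x i) else 1) * if i ∈ t then x i else 1 := by
  simp only [prod_mul_distrib, Fintype.prod_ite_mem]

theorem measurable_ite_star_mul_ite {ι 𝕜 : Type*} [DecidableEq ι] [RCLike 𝕜] (s t : Finset ι)
    (i : ι) :
    Measurable fun w : 𝕜 => (if i ∈ s then star w else 1) * if i ∈ t then w else 1 := by
  apply Measurable.mul <;> split_ifs <;> fun_prop

section Moments

variable {Ω ι 𝕜 : Type*} [MeasurableSpace Ω] {μ : Measure Ω} [Fintype ι] [RCLike 𝕜]

theorem ProbabilityTheory.iIndepFun.integrable_fun_prod {X : ι → Ω → 𝕜} (hX : iIndepFun X μ)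
    (hmeas : ∀ i, Measurable (X i)) (hint : ∀ i, Integrable (X i) μ) :
    Integrable (fun ω => ∏ i, X i ω) μ := by
  refine ⟨Finset.aestronglyMeasurable_fun_prod _ fun i _ => (hint i).1, ?_⟩
  have hnorm : iIndepFun (fun i ω => ‖X i ω‖ₑ) μ :=
    hX.comp (fun _ => enorm) fun _ => measurable_enorm
  have hprod : ∀ ω, ‖∏ i, X i ω‖ₑ = ∏ i, ‖X i ω‖ₑ := fun ω => by
    simp [enorm_eq_nnnorm, nnnorm_prod]
  simp only [HasFiniteIntegral, hprod]
  rw [lintegral_prod_eq_prod_lintegral_of_indepFun _ _ hnorm fun i => (hmeas i).enorm]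
  exact ENNReal.prod_lt_top fun i _ => (hint i).2

variable [DecidableEq ι]

theorem ProbabilityTheory.iIndepFun.integrable_prod_star_mul_prod {X : ι → Ω → 𝕜}
    (hX : iIndepFun X μ) (hmeas : ∀ i, Measurable (X i)) (hL2 : ∀ i, MemLp (X i) 2 μ)
    (s t : Finset ι) : Integrable (fun ω => (∏ i ∈ s, star (X i ω)) * ∏ i ∈ t, X i ω) μ := by
  have := hX.isProbabilityMeasure
  simp_rw [prod_star_mul_prod_eq_prod]
  refine (hX.comp _ (measurable_ite_star_mul_ite s t)).integrable_fun_prod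
    (fun i => (measurable_ite_star_mul_ite s t i).comp (hmeas i)) fun i => ?_
  have hs : MemLp (fun ω => if i ∈ s then star (X i ω) else 1) 2 μ := by
    split_ifs
    · exact (hL2 i).star
    · exact memLp_const 1
  have ht : MemLp (fun ω => if i ∈ t then X i ω else 1) 2 μ := by
    split_ifs
    · exact hL2 i
    · exact memLp_const 1
  exact hs.integrable_mul ht

theorem ProbabilityTheory.iIndepFun.integral_prod_star_mul_prod {X : ι → Ω → 𝕜}
    (hX : iIndepFun X μ) (hmeas : ∀ i, Measurable (X i)) (hmean : ∀ i, ∫ ω, X i ω ∂μ = 0)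
    (hvar : ∀ i, ∫ ω, ‖X i ω‖ ^ 2 ∂μ = 1) (s t : Finset ι) :
    ∫ ω, (∏ i ∈ s, star (X i ω)) * ∏ i ∈ t, X i ω ∂μ = if s = t then 1 else 0 := by
  have := hX.isProbabilityMeasure
  have hfactor : ∀ i, ∫ ω, (if i ∈ s then star (X i ω) else 1) * (if i ∈ t then X i ω else 1) ∂μ
      = if (i ∈ s ↔ i ∈ t) then 1 else 0 := fun i => by
    by_cases hs : i ∈ s <;> by_cases ht : i ∈ t <;> simp only [hs, ht, if_true, if_false]
    · simp_rw [RCLike.star_def, RCLike.conj_mul, ← RCLike.ofReal_pow]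
      rw [integral_ofReal, hvar i, RCLike.ofReal_one]
    · simp [integral_conj, hmean i]
    · simp [hmean i]
    · simp
  simp_rw [prod_star_mul_prod_eq_prod]
  rw [hX.integral_fun_prod_comp (fun i => (hmeas i).aemeasurable)
    fun i => (measurable_ite_star_mul_ite s t i).aestronglyMeasurable]
  simp_rw [hfactor, Fintype.prod_boole, Finset.ext_iff]

end Moments

theorem Equiv.Perm.sum_sign_of_comp_eq {α β : Type*} [Fintype α] [DecidableEq α] [DecidableEq β]
    (f : α → β) :
    ∑ σ : Perm α, (if f ∘ σ = f then (Perm.sign σ : ℤ) else 0) = if f.Injective then 1 else 0 := by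
  split_ifs with hf
  · have hstab : ∀ σ : Perm α, f ∘ σ = f ↔ σ = 1 := fun σ =>
      ⟨fun h => Perm.ext fun a => hf (congrFun h a), fun h => by simp [h]⟩
    simp [hstab]
  · obtain ⟨a, b, hab, hne⟩ : ∃ a b, f a = f b ∧ a ≠ b := by
      simpa [Function.Injective] using hf
    have hswap : f ∘ swap a b = f := funext fun x => by
      rcases eq_or_ne x a with rfl | hxa
      · simp [hab]
      rcases eq_or_ne x b with rfl | hxb
      · simp [hab]
      · simp [swap_apply_of_ne_of_ne hxa hxb]
    -- right multiplication by an odd element of the stabilizer is a sign-reversing bijection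
    have hcomp : ∀ σ : Perm α, f ∘ ⇑(σ * swap a b) = f ↔ f ∘ σ = f := fun σ => by
      rw [Perm.coe_mul, ← Function.comp_assoc, ← symm_swap, comp_symm_eq, hswap]
    set S := ∑ σ : Perm α, (if f ∘ σ = f then (Perm.sign σ : ℤ) else 0)
    have hS : S = -S := by
      calc S = ∑ σ : Perm α,
            (if f ∘ ⇑(σ * swap a b) = f then (Perm.sign (σ * swap a b) : ℤ) else 0) :=
            (Fintype.sum_equiv (Equiv.mulRight (swap a b)) _ _ fun σ => rfl).symm
        _ = -S := by
            rw [← sum_neg_distrib]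
            refine sum_congr rfl fun σ _ => ?_
            simp only [hcomp, Perm.sign_mul, Perm.sign_swap hne]
            split_ifs <;> simp
    linarith

section Expansion

variable {m n : Type*}

-- Replacing `none` at `a` by `inr a` makes `fillNone g ∘ σ = fillNone g` say that `σ` preserves
-- `g` and fixes the points where `g` is `none`.
def fillNone (g : n → Option m) : n → m ⊕ n := fun a => (g a).elim (.inr a) .inl

theorem fillNone_of_eq_some {g : n → Option m} {a : n} {b : m} (h : g a = some b) :
    fillNone g a = .inl b := by
  simp [fillNone, h]

section OptionGraph

variable [Fintype m] [Fintype n] [DecidableEq m]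

def optionGraph (g : n → Option m) : Finset (m × n) := univ.filter fun e => g e.2 = some e.1

theorem optionGraph_injective : Function.Injective (optionGraph (m := m) (n := n)) := by
  intro g g' h
  funext a
  have hmem : ∀ b, g a = some b ↔ g' a = some b := fun b => by
    simpa [optionGraph] using congrArg ((b, a) ∈ ·) h
  cases hg : g a with
  | none => cases hg' : g' a <;> simp_all
  | some b => exact ((hmem b).1 hg).symm

theorem prod_elim_eq_prod_optionGraph {M : Type*} [CommMonoid M] (g : n → Option m)
    (f : m → n → M) : ∏ a, (g a).elim 1 (f · a) = ∏ e ∈ optionGraph g, f e.1 e.2 := by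
  rw [optionGraph, prod_filter, Fintype.prod_prod_type_right]
  refine Fintype.prod_congr _ _ fun a => ?_
  cases h : g a <;> simp [h]

end OptionGraph

variable [Fintype n] [DecidableEq m] [DecidableEq n] {R : Type*} [CommRing R]

def diagCoeff (z : R) (σ : Perm n) (g : n → Option m) : R :=
  ∏ a, (g a).elim (if σ a = a then z else 0) fun _ => -1

theorem diagCoeff_mul_ite_comp_symm_eq (z : R) (σ : Perm n) (g : n → Option m) :
    diagCoeff z σ g * (if g ∘ σ.symm = g then 1 else 0) =
      if fillNone g ∘ σ = fillNone g then ∏ a, (g a).elim z (fun _ => -1) else 0 := by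
  have hcoeff : diagCoeff z σ g =
      if ∀ a, g a = none → σ a = a then ∏ a, (g a).elim z (fun _ => -1) else 0 := by
    calc diagCoeff z σ g = ∏ a, (if g a = none → σ a = a then 1 else 0) *
          (g a).elim z (fun _ => -1) :=
        Fintype.prod_congr _ _ fun a => by cases g a <;> simp
      _ = _ := by rw [prod_mul_distrib, Fintype.prod_boole, boole_mul]
  have hfix : fillNone g ∘ σ = fillNone g ↔ (∀ a, g a = none → σ a = a) ∧ g ∘ σ.symm = g := by
    rw [comp_symm_eq, eq_comm, funext_iff, funext_iff, ← forall_and]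
    refine forall_congr' fun a => ?_
    cases h₁ : g a <;> cases h₂ : g (σ a) <;> simp [fillNone, h₁, h₂, eq_comm]
  rw [hcoeff, ite_zero_mul_ite_zero, mul_one]
  exact if_congr hfix.symm rfl rfl

variable [Fintype m]

-- `g a = some i` selects the summand `i` of `(Aᴴ * A) (σ a) a`, and `g a = none` the diagonal term.
theorem det_smul_one_sub_conjTranspose_mul [StarRing R] (A : Matrix m n R) (z : R) :
    (z • (1 : Matrix n n R) - Aᴴ * A).det = ∑ σ : Perm n, ∑ g : n → Option m,
      ((Perm.sign σ : ℤ) : R) * (diagCoeff z σ g *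
        ((∏ e ∈ optionGraph (g ∘ σ.symm), star (A e.1 e.2)) * ∏ e ∈ optionGraph g, A e.1 e.2)) := by
  rw [Matrix.det_apply']
  refine sum_congr rfl fun σ _ => ?_
  rw [← mul_sum]
  congr 1
  have hentry : ∀ a, (z • (1 : Matrix n n R) - Aᴴ * A) (σ a) a = ∑ o : Option m,
      o.elim (if σ a = a then z else 0) (fun _ => -1) * (o.elim 1 fun b => star (A b (σ a))) *
        o.elim 1 fun b => A b a := fun a => by
    simp [Fintype.sum_option, Matrix.mul_apply, Matrix.one_apply, sub_eq_add_neg]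
  simp_rw [hentry, Fintype.prod_sum, prod_mul_distrib]
  refine Fintype.sum_congr _ _ fun g => ?_
  rw [diagCoeff, mul_assoc, ← prod_elim_eq_prod_optionGraph g A,
    ← prod_elim_eq_prod_optionGraph (g ∘ σ.symm) fun b c => star (A b c)]
  congr 2
  exact Fintype.prod_equiv σ _ _ fun a => by simp

theorem card_injective_fillNone_support_eq (T : Finset n) :
    #{g ∈ univ.filter fun g : n → Option m => (fillNone g).Injective |
      univ.filter (fun a => g a ≠ none) = T} = (Fintype.card m).descFactorial #T := by
  rw [← Fintype.card_coe T, ← Fintype.card_embedding_eq, ← card_univ]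
  symm
  refine card_bij (fun e _ a => if h : a ∈ T then some (e ⟨a, h⟩) else none) ?_ ?_ ?_
  · intro e _
    simp only [mem_filter, mem_univ, true_and]
    refine ⟨fun a b hab => ?_, by ext a; by_cases h : a ∈ T <;> simp [h]⟩
    by_cases ha : a ∈ T <;> by_cases hb : b ∈ T <;> simp_all [fillNone]
  · intro e₁ _ e₂ _ h
    ext x
    simpa [x.2] using congrFun h x
  · intro g hg
    simp only [mem_filter, mem_univ, true_and] at hg
    obtain ⟨hinj, rfl⟩ := hg
    have hsome : ∀ x : univ.filter (fun a => g a ≠ none), (g x).isSome := fun x =>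
      Option.isSome_iff_ne_none.2 (mem_filter.1 x.2).2
    refine ⟨⟨fun x => (g x).get (hsome x), fun x y hxy => Subtype.ext (hinj ?_)⟩, mem_univ _, ?_⟩
    · rw [fillNone_of_eq_some (Option.some_get (hsome x)).symm,
        fillNone_of_eq_some (Option.some_get (hsome y)).symm]
      exact congrArg Sum.inl hxy
    · funext a
      by_cases ha : g a = none
      · simp [ha]
      · rw [dif_pos (by simpa using ha)]
        exact Option.some_get _

theorem sum_ite_injective_fillNone (z : R) :
    ∑ g : n → Option m, (if (fillNone g).Injective then ∏ a, (g a).elim z (fun _ => -1) else 0) =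
      ∑ k ∈ range (Fintype.card n + 1), ((Fintype.card n).choose k *
        (Fintype.card m).descFactorial k : ℕ) * (-1) ^ k * z ^ (Fintype.card n - k) := by
  have hweight : ∀ T : Finset n, ∀ g ∈ {g ∈ univ.filter fun g : n → Option m =>
      (fillNone g).Injective | univ.filter (fun a => g a ≠ none) = T},
      ∏ a, (g a).elim z (fun _ => -1) = (-1) ^ #T * z ^ (Fintype.card n - #T) := by
    intro T g hg
    obtain rfl := (mem_filter.1 hg).2
    have hcard := card_filter_add_card_filter_not (s := univ) fun a => g a ≠ none
    rw [card_univ] at hcard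
    calc ∏ a, (g a).elim z (fun _ => -1) = ∏ a, if g a ≠ none then -1 else z :=
          Fintype.prod_congr _ _ fun a => by cases g a <;> simp
      _ = _ := by rw [prod_ite, prod_const, prod_const, ← hcard, Nat.add_sub_cancel_left]
  rw [← sum_filter, ← sum_fiberwise _ fun g => univ.filter fun a => g a ≠ none]
  simp_rw +singlePass [sum_congr rfl (hweight _), sum_const, card_injective_fillNone_support_eq]
  rw [← powerset_univ, sum_powerset_apply_card (fun k => (Fintype.card m).descFactorial k •
    ((-1 : R) ^ k * z ^ (Fintype.card n - k))), card_univ]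
  refine sum_congr rfl fun k _ => ?_
  simp only [nsmul_eq_mul]
  push_cast
  ring

theorem sum_sign_mul_diagCoeff_mul_ite (z : R) :
    ∑ σ : Perm n, ∑ g : n → Option m,
      ((Perm.sign σ : ℤ) : R) * (diagCoeff z σ g * if g ∘ σ.symm = g then 1 else 0) =
      ∑ k ∈ range (Fintype.card n + 1), ((Fintype.card n).choose k *
        (Fintype.card m).descFactorial k : ℕ) * (-1) ^ k * z ^ (Fintype.card n - k) := by
  rw [sum_comm]
  refine (sum_congr rfl fun g _ => ?_).trans (sum_ite_injective_fillNone z)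
  have hsign := congrArg (Int.cast : ℤ → R) (Perm.sum_sign_of_comp_eq (fillNone g))
  push_cast [Int.cast_ite] at hsign
  simp_rw [diagCoeff_mul_ite_comp_symm_eq, mul_ite, mul_zero, ← ite_zero_mul]
  rw [← sum_mul, hsign, boole_mul]

end Expansion

theorem sum_choose_mul_descFactorial_eq_laguerre {p n : ℕ} (hpn : p ≤ n) (z : ℂ) :
    ∑ k ∈ range (n + 1), ((n.choose k * p.descFactorial k : ℕ) : ℂ) * (-1) ^ k * z ^ (n - k) =
      (-1) ^ p * (p.factorial : ℂ) * z ^ (n - p) * laguerre ((n : ℝ) - p) p z := by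
  have hvanish : ∀ k ∈ range (n + 1), k ∉ range (p + 1) →
      ((n.choose k * p.descFactorial k : ℕ) : ℂ) * (-1) ^ k * z ^ (n - k) = 0 := fun k _ hk => by
    rw [Nat.descFactorial_eq_zero_iff_lt.2 (by simpa using hk)]
    simp
  rw [← sum_subset (range_subset_range.2 (by omega)) hvanish, ← sum_range_reflect, laguerre,
    add_sub_cancel, mul_sum]
  refine sum_congr rfl fun j hj => ?_
  obtain ⟨k, rfl⟩ : ∃ k, p = k + j := ⟨p - j, by simp at hj; omega⟩
  obtain ⟨r, rfl⟩ : ∃ r, n = k + j + r := ⟨n - (k + j), by omega⟩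
  have hchoose : ((k + j + r).descFactorial k : ℂ) = k.factorial * (k + j + r).choose k := by
    exact_mod_cast Nat.descFactorial_eq_factorial_mul_choose _ _
  have hfact : ((k + j).factorial : ℂ) = j.factorial * (k + j).descFactorial k := by
    exact_mod_cast (Nat.factorial_mul_descFactorial (Nat.le_add_right k j)).symm.trans (by simp)
  rw [show k + j + 1 - 1 - j = k by omega, show k + j - j = k by omega,
    show k + j + r - k = j + r by omega, show k + j + r - (k + j) = r by omega,
    descPochhammer_eval_eq_descFactorial]
  push_cast
  have hj0 : (j.factorial : ℂ) ≠ 0 := Nat.cast_ne_zero.2 j.factorial_ne_zero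
  have hk0 : (k.factorial : ℂ) ≠ 0 := Nat.cast_ne_zero.2 k.factorial_ne_zero
  rw [hchoose, hfact, neg_pow z, pow_add, pow_add]
  field_simp
  rw [← pow_mul, pow_mul', neg_one_sq, one_pow, mul_one]

theorem integral_det_smul_one_sub_conjTranspose_mul {Ω 𝕜 m n : Type*} [MeasurableSpace Ω]
    {μ : Measure Ω} [RCLike 𝕜] [Fintype m] [Fintype n] [DecidableEq m] [DecidableEq n]
    (M : Ω → Matrix m n 𝕜) (hmeas : ∀ i j, Measurable fun ω => M ω i j)
    (hindep : iIndepFun (fun (ij : m × n) ω => M ω ij.1 ij.2) μ)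
    (hmean : ∀ i j, ∫ ω, M ω i j ∂μ = 0) (hvar : ∀ i j, ∫ ω, ‖M ω i j‖ ^ 2 ∂μ = 1) (z : 𝕜) :
    ∫ ω, (z • (1 : Matrix n n 𝕜) - (M ω)ᴴ * M ω).det ∂μ =
      ∑ k ∈ range (Fintype.card n + 1), ((Fintype.card n).choose k *
        (Fintype.card m).descFactorial k : ℕ) * (-1) ^ k * z ^ (Fintype.card n - k) := by
  have hL2 : ∀ i j, MemLp (fun ω => M ω i j) 2 μ := fun i j => by
    refine (memLp_two_iff_integrable_sq_norm (hmeas i j).aestronglyMeasurable).2 ?_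
    -- a non-integrable function would have Bochner integral `0`, not `1`
    by_contra h
    simpa [integral_undef h] using hvar i j
  have hterm : ∀ σ g, Integrable (fun ω => ((Perm.sign σ : ℤ) : 𝕜) * (diagCoeff z σ g *
      ((∏ e ∈ optionGraph (g ∘ σ.symm), star (M ω e.1 e.2)) *
        ∏ e ∈ optionGraph g, M ω e.1 e.2))) μ := fun σ g =>
    ((hindep.integrable_prod_star_mul_prod (fun e => hmeas e.1 e.2) (fun e => hL2 e.1 e.2) _
      _).const_mul _).const_mul _
  simp_rw [det_smul_one_sub_conjTranspose_mul]
  rw [integral_finsetSum _ fun σ _ => integrable_finsetSum _ fun g _ => hterm σ g,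
    ← sum_sign_mul_diagCoeff_mul_ite z]
  refine sum_congr rfl fun σ _ => ?_
  rw [integral_finsetSum _ fun g _ => hterm σ g]
  refine sum_congr rfl fun g _ => ?_
  rw [integral_const_mul, integral_const_mul, hindep.integral_prod_star_mul_prod
    (fun e => hmeas e.1 e.2) (fun e => hmean e.1 e.2) (fun e => hvar e.1 e.2)]
  simp only [optionGraph_injective.eq_iff]

/-- Let `1 ≤ p ≤ n` and let `M` be a random complex `p×n` matrix whose entries are
independent with mean `0` and `E(|t_{ij}|²) = 1`; set `W := Mᴴ M`.  Then for every
`z ∈ ℂ`, `E(det(z I_n − W)) = (−1)^p p! z^{n-p} L_p^{(n-p)}(z)`. -/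
theorem expectation_det_eq_laguerre (p n : ℕ) (hpn : p ≤ n)
    (Ω : Type) (_ : MeasureSpace Ω)
    (M : Ω → Matrix (Fin p) (Fin n) ℂ)
    (hmeas : ∀ i j, Measurable fun ω => M ω i j)
    (hindep : iIndepFun
      (fun (ij : Fin p × Fin n) ω => M ω ij.1 ij.2) (volume : Measure Ω))
    (hmean : ∀ i j, (∫ ω, M ω i j) = 0)
    (hvar : ∀ i j, (∫ ω, (‖M ω i j‖ : ℝ) ^ 2) = 1)
    (z : ℂ) :
    (∫ ω, (z • (1 : Matrix (Fin n) (Fin n) ℂ) - (M ω)ᴴ * M ω).det) =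
      (-1) ^ p * (p.factorial : ℂ) * z ^ (n - p) * laguerre ((n : ℝ) - p) p z := by
  rw [integral_det_smul_one_sub_conjTranspose_mul M hmeas hindep hmean hvar z, Fintype.card_fin,
    Fintype.card_fin, sum_choose_mul_descFactorial_eq_laguerre hpn z]
end

section
/- Let 1 ≤ p ≤ n be integers and let M = (t_{ij}) be a random complex p×n matrix whose entries are independent random variables with E(t_{ij}) = 0 and E(|t_{ij}|²) = 1. Let J ⊆ {1,…,n} be a set of cardinality k ≤ p and σ a permutation of J. If σ is not the identity of J, then E(ξ*_σ) = 0; if σ is the identity of J, then E(ξ*_σ) = p!/(p-k)!. -/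
/-!
Fix an injection `τ : J ↪ Fin p`. The factors `conj (t_{τ j, j}) * t_{τ j, σ j}`, `j ∈ J`, are
functions of pairwise distinct rows of `M`, and the rows of a matrix with independent entries are
independent, so the expectation of their product is the product of their expectations. A factor
has expectation `E |t_{τ j, j}|² = 1` when `σ j = j`, and `conj (E t_{τ j, j}) * E t_{τ j, σ j} = 0`
otherwise, because two distinct entries are independent. Hence every `τ` contributes `1` to
`E ξ*_σ` when `σ` fixes `J` pointwise and `0` otherwise, and there are `p!/(p-k)!` injections.
-/

open MeasureTheory ProbabilityTheory Matrix
open scoped ENNReal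

/-- `ξ*_σ = Σ_τ Π_{j∈J} conj(t_{τ(j),j}) t_{τ(j),σ(j)}`, the sum being over all
injective maps `τ : J → {1,…,p}`. -/
noncomputable def xiStar {p n : ℕ} (M : Matrix (Fin p) (Fin n) ℂ) (J : Finset (Fin n))
    (σ : Equiv.Perm (Fin n)) : ℂ :=
  ∑ τ : { x // x ∈ J } ↪ Fin p, ∏ j : { x // x ∈ J },
    (starRingEnd ℂ) (M (τ j) j) * M (τ j) (σ j)

open scoped ComplexConjugate

namespace ProbabilityTheory

variable {Ω : Type*} {mΩ : MeasurableSpace Ω} {μ : Measure Ω}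

lemma iIndepFun.curry {ι κ 𝓧 : Type*} [MeasurableSpace 𝓧] {X : ι → κ → Ω → 𝓧}
    (mX : ∀ i j, Measurable (X i j)) (h : iIndepFun (fun p : ι × κ ↦ X p.1 p.2) μ) :
    iIndepFun (fun i ω ↦ (X i · ω)) μ := by
  have := h.isProbabilityMeasure
  have hrow (i : ι) : μ.map (fun ω ↦ (X i · ω)) = Measure.infinitePi (fun j ↦ μ.map (X i j)) :=
    (h.precomp (Prod.mk_right_injective i)).map_fun_eq_infinitePi_map (mX i)
  have hcurry : (fun ω i j ↦ X i j ω) =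
      MeasurableEquiv.curry ι κ 𝓧 ∘ fun ω (p : ι × κ) ↦ X p.1 p.2 ω := rfl
  rw [iIndepFun_iff_map_fun_eq_infinitePi_map (fun i ↦ by fun_prop), hcurry,
    ← Measure.map_map (by fun_prop) (by fun_prop),
    (h.map_fun_eq_infinitePi_map (fun p ↦ mX p.1 p.2) :
      μ.map (fun ω (p : ι × κ) ↦ X p.1 p.2 ω) = _)]
  have (i : ι) (j : κ) := Measure.isProbabilityMeasure_map (μ := μ) (mX i j).aemeasurable
  exact (Measure.infinitePi_map_curry (fun i j ↦ μ.map (X i j))).trans (by simp_rw [hrow])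

lemma iIndepFun.integrable_finset_prod {ι 𝕜 : Type*} [RCLike 𝕜] {X : ι → Ω → 𝕜}
    (hX : iIndepFun X μ) (iX : ∀ i, Integrable (X i) μ) (s : Finset ι) :
    Integrable (fun ω ↦ ∏ i ∈ s, X i ω) μ := by
  classical
  induction s using Finset.induction_on with
  | empty =>
    have := hX.isProbabilityMeasure
    simp
  | insert i s hi ih =>
    simp_rw [Finset.prod_insert hi, mul_comm (X i _)]
    rw [← Finset.prod_fn] at ih
    have := (hX.indepFun_finsetProd_of_notMem₀ (fun i ↦ (iX i).aemeasurable) hi).integrable_mul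
      ih (iX i)
    rwa [Finset.prod_fn, Pi.mul_def] at this

lemma IndepFun.integral_conj_mul {𝕜 : Type*} [RCLike 𝕜] {X Y : Ω → 𝕜} (h : IndepFun X Y μ)
    (mX : Measurable X) (mY : Measurable Y) :
    ∫ ω, conj (X ω) * Y ω ∂μ = conj (∫ ω, X ω ∂μ) * ∫ ω, Y ω ∂μ := by
  rw [← integral_conj]
  exact (h.comp RCLike.continuous_conj.measurable measurable_id).integral_fun_mul_eq_mul_integral
    (RCLike.continuous_conj.measurable.comp mX).aestronglyMeasurable mY.aestronglyMeasurable

end ProbabilityTheory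

namespace MeasureTheory

variable {Ω : Type*} {mΩ : MeasurableSpace Ω} {μ : Measure Ω}

lemma memLp_two_of_integral_norm_sq_ne_zero {E : Type*} [NormedAddCommGroup E] {X : Ω → E}
    (hX : AEStronglyMeasurable X μ) (h : ∫ ω, ‖X ω‖ ^ 2 ∂μ ≠ 0) : MemLp X 2 μ :=
  (memLp_two_iff_integrable_sq_norm hX).2 <| by
    by_contra hX
    exact h (integral_undef hX)

lemma integral_conj_mul_self {𝕜 : Type*} [RCLike 𝕜] (X : Ω → 𝕜) :
    ∫ ω, conj (X ω) * X ω ∂μ = ((∫ ω, ‖X ω‖ ^ 2 ∂μ : ℝ) : 𝕜) := by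
  simp_rw [RCLike.conj_mul]
  exact_mod_cast integral_ofReal (𝕜 := 𝕜)

end MeasureTheory

section RandomMatrix

variable {Ω ι κ 𝕜 : Type*} [RCLike 𝕜] {mΩ : MeasurableSpace Ω} {μ : Measure Ω}
  {M : Ω → Matrix ι κ 𝕜}

lemma integrable_conj_mul_entry (hmeas : ∀ i j, Measurable fun ω ↦ M ω i j)
    (hvar : ∀ i j, ∫ ω, ‖M ω i j‖ ^ 2 ∂μ = 1) (i i' : ι) (j j' : κ) :
    Integrable (fun ω ↦ conj (M ω i j) * M ω i' j') μ := by
  have hL2 (i : ι) (j : κ) : MemLp (fun ω ↦ M ω i j) 2 μ :=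
    memLp_two_of_integral_norm_sq_ne_zero (hmeas i j).aestronglyMeasurable (by simp [hvar])
  exact (hL2 i j).star.integrable_mul (hL2 i' j')

lemma integral_conj_mul_entry [DecidableEq κ] (hmeas : ∀ i j, Measurable fun ω ↦ M ω i j)
    (hindep : iIndepFun (fun (ij : ι × κ) ω ↦ M ω ij.1 ij.2) μ)
    (hmean : ∀ i j, ∫ ω, M ω i j ∂μ = 0) (hvar : ∀ i j, ∫ ω, ‖M ω i j‖ ^ 2 ∂μ = 1)
    (i : ι) (j j' : κ) :
    ∫ ω, conj (M ω i j) * M ω i j' ∂μ = if j' = j then 1 else 0 := by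
  split_ifs with hj
  · rw [hj, integral_conj_mul_self, hvar, RCLike.ofReal_one]
  · have hij : ((i, j) : ι × κ) ≠ (i, j') := by simpa [eq_comm] using hj
    rw [(hindep.indepFun hij).integral_conj_mul (hmeas i j) (hmeas i j'), hmean, map_zero, zero_mul]

lemma iIndepFun_conj_mul_entry_of_injective {α : Type*}
    (hmeas : ∀ i j, Measurable fun ω ↦ M ω i j)
    (hindep : iIndepFun (fun (ij : ι × κ) ω ↦ M ω ij.1 ij.2) μ)
    {τ : α → ι} (hτ : Function.Injective τ) (c d : α → κ) :
    iIndepFun (fun a ω ↦ conj (M ω (τ a) (c a)) * M ω (τ a) (d a)) μ := by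
  have hrows := (hindep.curry (X := fun i j ω ↦ M ω i j) hmeas).precomp hτ
  exact hrows.comp (fun a v ↦ conj (v (c a)) * v (d a))
    (fun a ↦ Measurable.mul (f := fun v : κ → 𝕜 ↦ conj (v (c a)))
      (RCLike.continuous_conj.measurable.comp (measurable_pi_apply (c a)))
      (measurable_pi_apply (d a)))

lemma integral_prod_conj_mul_entry {α : Type*} [Fintype α] [DecidableEq κ]
    (hmeas : ∀ i j, Measurable fun ω ↦ M ω i j)
    (hindep : iIndepFun (fun (ij : ι × κ) ω ↦ M ω ij.1 ij.2) μ)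
    (hmean : ∀ i j, ∫ ω, M ω i j ∂μ = 0) (hvar : ∀ i j, ∫ ω, ‖M ω i j‖ ^ 2 ∂μ = 1)
    (τ : α ↪ ι) (c d : α → κ) :
    ∫ ω, ∏ a, conj (M ω (τ a) (c a)) * M ω (τ a) (d a) ∂μ = ∏ a, if d a = c a then 1 else 0 := by
  rw [(iIndepFun_conj_mul_entry_of_injective hmeas hindep τ.injective c d)
    |>.integral_fun_prod_eq_prod_integral
      fun a ↦ (integrable_conj_mul_entry hmeas hvar _ _ _ _).aestronglyMeasurable]
  simp_rw [integral_conj_mul_entry hmeas hindep hmean hvar]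

end RandomMatrix

lemma integral_xiStar {Ω : Type*} {mΩ : MeasurableSpace Ω} {μ : Measure Ω} {p n : ℕ}
    {M : Ω → Matrix (Fin p) (Fin n) ℂ} (hmeas : ∀ i j, Measurable fun ω ↦ M ω i j)
    (hindep : iIndepFun (fun (ij : Fin p × Fin n) ω ↦ M ω ij.1 ij.2) μ)
    (hmean : ∀ i j, ∫ ω, M ω i j ∂μ = 0) (hvar : ∀ i j, ∫ ω, ‖M ω i j‖ ^ 2 ∂μ = 1)
    (J : Finset (Fin n)) (σ : Equiv.Perm (Fin n)) :
    ∫ ω, xiStar (M ω) J σ ∂μ =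
      p.descFactorial J.card * ∏ j : J, if σ j = (j : Fin n) then 1 else 0 := by
  have hint (τ : J ↪ Fin p) : Integrable
      (fun ω ↦ ∏ j : J, conj (M ω (τ j) j) * M ω (τ j) (σ j)) μ :=
    (iIndepFun_conj_mul_entry_of_injective hmeas hindep τ.injective _ _).integrable_finset_prod
      (fun j ↦ integrable_conj_mul_entry hmeas hvar _ _ _ _) Finset.univ
  simp only [xiStar]
  rw [integral_finsetSum _ fun τ _ ↦ hint τ]
  simp_rw [integral_prod_conj_mul_entry hmeas hindep hmean hvar]
  rw [Finset.sum_const, Finset.card_univ, Fintype.card_embedding_eq, Fintype.card_coe,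
    Fintype.card_fin, nsmul_eq_mul]

/-- Let `1 ≤ p ≤ n` and let `M` be a random complex `p×n` matrix whose entries
are independent with mean `0` and `E(|t_{ij}|²) = 1`.  Let `J ⊆ {1,…,n}` with
`|J| = k ≤ p` and let `σ` be a permutation of `J` (encoded as a permutation of
`{1,…,n}` fixing the complement of `J`).  If `σ ≠ id_J` then `E(ξ*_σ) = 0`, and
if `σ = id_J` then `E(ξ*_σ) = p!/(p-k)!`. -/
theorem expectation_xiStar (p n : ℕ)
    (Ω : Type) (_ : MeasureSpace Ω)
    (M : Ω → Matrix (Fin p) (Fin n) ℂ)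
    (hmeas : ∀ i j, Measurable fun ω => M ω i j)
    (hindep : iIndepFun
      (fun (ij : Fin p × Fin n) ω => M ω ij.1 ij.2) (volume : Measure Ω))
    (hmean : ∀ i j, (∫ ω, M ω i j) = 0)
    (hvar : ∀ i j, (∫ ω, (‖M ω i j‖ : ℝ) ^ 2) = 1)
    (J : Finset (Fin n)) (hJ : J.card ≤ p)
    (σ : Equiv.Perm (Fin n)) (hσ : ∀ j ∉ J, σ j = j) :
    (σ ≠ 1 → (∫ ω, xiStar (M ω) J σ) = 0) ∧
      (σ = 1 → (∫ ω, xiStar (M ω) J σ) =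
        ((p.factorial / (p - J.card).factorial : ℕ) : ℂ)) := by
  rw [integral_xiStar hmeas hindep hmean hvar]
  constructor
  · intro hσ1
    obtain ⟨x, hx⟩ := not_forall.mp (mt Equiv.ext hσ1)
    have hxJ : x ∈ J := by_contra fun h ↦ hx (hσ x h)
    rw [Finset.prod_eq_zero (Finset.mem_univ ⟨x, hxJ⟩) (if_neg hx), mul_zero]
  · rintro rfl
    simp [Nat.descFactorial_eq_div hJ]
end

section
/- There is a universal constant c > 0 such that for all integers n ≥ 1 and 0 ≤ p ≤ n and every real z ≥ 0, one has |R^{[1]}(n,p,z)| ≤ c · (p+1)³ · n! · p! · z^{n-p} · e^{z}. -/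
/-
Inclusion–exclusion over the points of `J₁ ∩ J₂` where `τ₁` and `τ₂` agree gives
`|𝔐*(J₁,J₂)| = Σ_{S ⊆ J₁ ∩ J₂} (-1)^|S| (p)_{|J₁|} (p-|S|)_{|J₂|-|S|}`. Splitting
`(p)_{|J₁|} = (p)_{|S|} (p-|S|)_{|J₁|-|S|}` makes each summand a product of a factor depending
on `J₁` and one depending on `J₂`, so summing over `J₁, J₂ ⊇ S` first yields
`R¹(n,p,z) = Σ_s (-1)^s C(n,s) (p)_s g(n-s,p-s,z)²`, where `g(k,m,z) = z^k C_m(k; z)` is a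
scaled Charlier polynomial. The orthogonality of the Charlier polynomials for the Poisson weight,
`Σ_k g(k,m,z)² / (k! z^k) = e^z m! / z^m`, bounds every square by `k! m! z^(k-m) e^z`, and
`C(n,s) (p)_s (n-s)! (p-s)! = n! p! / s!` leaves `Σ_s 1/s! ≤ e`.
-/

open scoped ENNReal

/-- `R¹(n,p,z) = Σ_{J₁,J₂ ⊆ {1,…,n}} (−1)^{|J₁|+|J₂|} |𝔐*(J₁,J₂)| z^{2n−|J₁|−|J₂|}`,
where `𝔐*(J₁,J₂)` is the set of pairs `(τ₁,τ₂)` of injective maps `τᵢ : Jᵢ → {1,…,p}`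
with `τ₁(j) ≠ τ₂(j)` for every `j ∈ J₁ ∩ J₂`. -/
noncomputable def R1 (n p : ℕ) (z : ℂ) : ℂ :=
  ∑ J₁ : Finset (Fin n), ∑ J₂ : Finset (Fin n),
    (-1 : ℂ) ^ (J₁.card + J₂.card) *
      (Nat.card { τ : ({ x // x ∈ J₁ } ↪ Fin p) × ({ x // x ∈ J₂ } ↪ Fin p) //
          ∀ (j₁ : { x // x ∈ J₁ }) (j₂ : { x // x ∈ J₂ }),
            (j₁ : Fin n) = (j₂ : Fin n) → τ.1 j₁ ≠ τ.2 j₂ } : ℂ) *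
      z ^ (2 * n - J₁.card - J₂.card)

open Finset
open scoped Nat

section Embeddings

theorem card_embedding_extending {γ β : Type*} [Fintype γ] [Fintype β] [DecidableEq β]
    (q : γ → Prop) [DecidablePred q] (σ : {x // q x} ↪ β) :
    Nat.card {τ : γ ↪ β // ∀ x : {x // q x}, τ x = σ x} =
      (Nat.card β - Nat.card {x // q x}).descFactorial (Nat.card {x // ¬ q x}) := by
  let e : (γ ↪ β) ≃ Σ f : {x // q x} ↪ β, {x // ¬ q x} ↪ ↥(Set.range f)ᶜ :=
    (Equiv.embeddingCongr (Equiv.sumCompl q).symm (Equiv.refl β)).trans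
      Equiv.sumEmbeddingEquivSigmaEmbeddingRestricted
  have he : ∀ τ, (∀ x, τ x = σ x) ↔ (e τ).1 = σ := fun τ => by
    rw [DFunLike.ext_iff]; rfl
  rw [Nat.card_congr ((Equiv.subtypeEquivRight he).trans
    (e.subtypeEquivOfSubtype.trans (Equiv.sigmaSubtype σ)))]
  simp only [Nat.card_eq_fintype_card, Fintype.card_embedding_eq, Fintype.card_compl_set,
    Fintype.card_range]

variable {α β : Type*} [DecidableEq α] [Fintype β] [DecidableEq β] (J₁ J₂ : Finset α)

theorem card_embedding_pairs_agreeing_on {S : Finset α} (hS : S ⊆ J₁ ∩ J₂) :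
    Nat.card {τ : (J₁ ↪ β) × (J₂ ↪ β) //
        ∀ x ∈ S, ∀ (h₁ : x ∈ J₁) (h₂ : x ∈ J₂), τ.1 ⟨x, h₁⟩ = τ.2 ⟨x, h₂⟩} =
      (Fintype.card β).descFactorial #J₁ * (Fintype.card β - #S).descFactorial (#J₂ - #S) := by
  have hS₁ : ∀ {x}, x ∈ S → x ∈ J₁ := fun h => (mem_inter.mp (hS h)).1
  have hS₂ : ∀ {x}, x ∈ S → x ∈ J₂ := fun h => (mem_inter.mp (hS h)).2
  have hin : Nat.card {x : J₂ // ↑x ∈ S} = #S := by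
    rw [Nat.card_congr (Equiv.subtypeSubtypeEquivSubtype hS₂), Nat.card_eq_fintype_card,
      Fintype.card_coe]
  have hout : Nat.card {x : J₂ // ↑x ∉ S} = #J₂ - #S := by
    rw [Nat.card_eq_fintype_card, Fintype.card_subtype_compl, Fintype.card_coe,
      ← Nat.card_eq_fintype_card, hin]
  let restrict (τ₁ : J₁ ↪ β) : {x : J₂ // ↑x ∈ S} ↪ β :=
    ⟨fun y => τ₁ ⟨y.1.1, hS₁ y.2⟩, fun y y' h =>
      Subtype.ext <| Subtype.ext <| by simpa using congrArg Subtype.val (τ₁.injective h)⟩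
  have hfiber (τ₁ : J₁ ↪ β) : Nat.card {τ₂ : J₂ ↪ β //
        ∀ x ∈ S, ∀ (h₁ : x ∈ J₁) (h₂ : x ∈ J₂), τ₁ ⟨x, h₁⟩ = τ₂ ⟨x, h₂⟩} =
      (Fintype.card β - #S).descFactorial (#J₂ - #S) := by
    rw [← hout, ← hin, ← Nat.card_eq_fintype_card, ← card_embedding_extending _ (restrict τ₁)]
    exact Nat.card_congr (Equiv.subtypeEquivRight fun τ₂ =>
      ⟨fun h y => (h y.1 y.2 _ _).symm, fun h x hx _ _ => (h ⟨⟨x, _⟩, hx⟩).symm⟩)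
  rw [Nat.card_congr (Equiv.subtypeProdEquivSigmaSubtype fun (τ₁ : J₁ ↪ β) (τ₂ : J₂ ↪ β) =>
    ∀ x ∈ S, ∀ (h₁ : x ∈ J₁) (h₂ : x ∈ J₂), τ₁ ⟨x, h₁⟩ = τ₂ ⟨x, h₂⟩), Nat.card_sigma]
  simp only [hfiber, sum_const, card_univ, Fintype.card_embedding_eq, Fintype.card_coe,
    smul_eq_mul]

theorem card_embedding_pairs_disagreeing :
    (Nat.card {τ : (J₁ ↪ β) × (J₂ ↪ β) //
        ∀ (j₁ : J₁) (j₂ : J₂), (j₁ : α) = j₂ → τ.1 j₁ ≠ τ.2 j₂} : ℤ) =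
      ∑ S ∈ (J₁ ∩ J₂).powerset, (-1 : ℤ) ^ #S *
        ((Fintype.card β).descFactorial #J₁ * (Fintype.card β - #S).descFactorial (#J₂ - #S) :
          ℕ) := by
  let agreeAt (x : α) : Finset ((J₁ ↪ β) × (J₂ ↪ β)) :=
    {τ | ∀ (h₁ : x ∈ J₁) (h₂ : x ∈ J₂), τ.1 ⟨x, h₁⟩ = τ.2 ⟨x, h₂⟩}
  have hgood : Nat.card {τ : (J₁ ↪ β) × (J₂ ↪ β) //
      ∀ (j₁ : J₁) (j₂ : J₂), (j₁ : α) = j₂ → τ.1 j₁ ≠ τ.2 j₂} =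
      #((J₁ ∩ J₂).inf fun x => (agreeAt x)ᶜ) := by
    rw [Nat.card_eq_fintype_card, Fintype.card_subtype]
    congr 1
    ext τ
    simp only [agreeAt, mem_filter, mem_univ, true_and, mem_inf, mem_compl, not_forall]
    constructor
    · intro h x hx
      exact ⟨(mem_inter.mp hx).1, (mem_inter.mp hx).2, h _ _ rfl⟩
    · rintro h ⟨x, hx₁⟩ ⟨_, hx₂⟩ rfl
      obtain ⟨_, _, hne⟩ := h x (mem_inter.mpr ⟨hx₁, hx₂⟩)
      exact hne
  rw [hgood, inclusion_exclusion_card_inf_compl]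
  refine sum_congr rfl fun S hS => ?_
  rw [← card_embedding_pairs_agreeing_on J₁ J₂ (mem_powerset.mp hS), Nat.card_eq_fintype_card,
    Fintype.card_subtype]
  congr 3
  ext τ
  simp [agreeAt, mem_inf]

end Embeddings

theorem Finset.sum_sum_sum_powerset_inter {α R : Type*} [Fintype α] [DecidableEq α]
    [CommSemiring R] (c : Finset α → R) (f : Finset α → Finset α → R) :
    ∑ J₁, ∑ J₂, ∑ S ∈ (J₁ ∩ J₂).powerset, c S * (f S J₁ * f S J₂) =
      ∑ S, c S * (∑ J with S ⊆ J, f S J) ^ 2 := by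
  have hfilter (J₁ J₂ : Finset α) :
      (J₁ ∩ J₂).powerset = univ.filter fun S => S ⊆ J₁ ∧ S ⊆ J₂ := by
    ext S
    simp only [mem_powerset, mem_filter, mem_univ, true_and, subset_inter_iff]
  simp_rw [hfilter, sum_filter, sq, sum_mul_sum, mul_sum, ite_zero_mul_ite_zero, mul_ite,
    mul_zero]
  exact (sum_congr rfl fun _ _ => sum_comm).trans sum_comm

theorem Finset.sum_superset_apply_card {α M : Type*} [Fintype α] [DecidableEq α]
    [AddCommMonoid M] (S : Finset α) (f : ℕ → M) :
    ∑ J with S ⊆ J, f #J =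
      ∑ k ∈ range (Fintype.card α - #S + 1), (Fintype.card α - #S).choose k • f (#S + k) := by
  have himage : ({J | S ⊆ J} : Finset (Finset α)) = Sᶜ.powerset.image (S ∪ ·) := by
    rw [compl_eq_univ_sdiff, ← Icc_eq_image_powerset (subset_univ S)]
    ext J; simp
  have hdisj {K : Finset α} (hK : K ∈ Sᶜ.powerset) : Disjoint S K :=
    disjoint_left.mpr fun _ hS hK' => mem_compl.mp (mem_powerset.mp hK hK') hS
  rw [himage, sum_image fun K hK K' hK' h => by
      rw [← union_sdiff_cancel_left (hdisj hK), h, union_sdiff_cancel_left (hdisj hK')]]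
  rw [sum_congr rfl fun K hK => by rw [card_union_of_disjoint (hdisj hK)],
    sum_powerset_apply_card (fun k => f (#S + k)), card_compl]

theorem Nat.add_descFactorial_eq_sum (a i b : ℕ) :
    (a + i).descFactorial b =
      ∑ j ∈ range (b + 1), b.choose j * (a.descFactorial j * i.descFactorial (b - j)) := by
  rw [descFactorial_eq_factorial_mul_choose, add_choose_eq,
    Nat.sum_antidiagonal_eq_sum_range_succ_mk, mul_sum]
  refine sum_congr rfl fun j hj => ?_
  rw [descFactorial_eq_factorial_mul_choose, descFactorial_eq_factorial_mul_choose,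
    ← choose_mul_factorial_mul_factorial (Nat.lt_succ_iff.mp (mem_range.mp hj))]
  ring

theorem Nat.descFactorial_mul_descFactorial_eq_sum (k a b : ℕ) :
    k.descFactorial a * k.descFactorial b =
      ∑ j ∈ range (b + 1), a.choose j * b.choose j * j ! * k.descFactorial (a + b - j) := by
  rcases lt_or_ge k a with hka | hak
  · rw [descFactorial_of_lt hka, zero_mul]
    refine (sum_eq_zero fun j hj => ?_).symm
    rw [descFactorial_of_lt (by grind), mul_zero]
  obtain ⟨i, rfl⟩ := Nat.exists_eq_add_of_le' hak
  rw [add_comm i a, add_descFactorial_eq_sum a i b, mul_sum]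
  refine sum_congr rfl fun j hj => ?_
  have hjb : j ≤ b := Nat.lt_succ_iff.mp (mem_range.mp hj)
  have hsplit : (a + i).descFactorial a * i.descFactorial (b - j) =
      (a + i).descFactorial (a + b - j) := by
    rw [← descFactorial_mul_descFactorial (show a ≤ a + b - j by omega), mul_comm]
    congr 2 <;> omega
  rw [← hsplit, descFactorial_eq_factorial_mul_choose a j]
  ring

theorem alternating_sum_range_choose_mul_choose {R : Type*} [CommRing R] (m j : ℕ) :
    ∑ a ∈ range (m + 1), (-1 : R) ^ a * m.choose a * a.choose j =
      if j = m then (-1) ^ m else 0 := by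
  rcases lt_or_ge m j with hmj | hjm
  · rw [if_neg hmj.ne']
    exact sum_eq_zero fun a ha => by
      rw [Nat.choose_eq_zero_of_lt (n := a) (by grind), Nat.cast_zero, mul_zero]
  obtain ⟨t, rfl⟩ := Nat.exists_eq_add_of_le hjm
  have hshift (s : ℕ) : (-1 : R) ^ (j + s) * (j + t).choose (j + s) * (j + s).choose j
      = (-1) ^ j * (j + t).choose j * ((-1) ^ s * t.choose s) := by
    have := Nat.choose_mul (n := j + t) (Nat.le_add_right j s)
    rw [Nat.add_sub_cancel_left, Nat.add_sub_cancel_left] at this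
    rw [pow_add, mul_assoc _ (((j + t).choose (j + s) : ℕ) : R), ← Nat.cast_mul, this,
      Nat.cast_mul]
    ring
  have halt : ∑ s ∈ range (t + 1), (-1 : R) ^ s * t.choose s = if t = 0 then 1 else 0 := by
    exact_mod_cast congrArg (Int.cast (R := R)) Int.alternating_sum_range_choose
  rw [add_assoc, sum_range_add, sum_eq_zero fun a ha => by
      rw [Nat.choose_eq_zero_of_lt (mem_range.mp ha), Nat.cast_zero, mul_zero],
    zero_add]
  simp only [hshift, ← mul_sum, halt]
  by_cases ht : t = 0 <;> simp [ht]

theorem sum_sum_alternating_choose_mul_sum_choose_mul_choose {R : Type*} [CommRing R]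
    (m : ℕ) (w : R) :
    ∑ a ∈ range (m + 1), ∑ b ∈ range (m + 1), (-1) ^ a * m.choose a * ((-1) ^ b * m.choose b) *
      ∑ j ∈ range (b + 1), (a.choose j * b.choose j * j ! : R) * w ^ j = m ! * w ^ m := by
  have hext (a b : ℕ) (hb : b ∈ range (m + 1)) :
      (-1) ^ a * m.choose a * ((-1) ^ b * m.choose b) *
        ∑ j ∈ range (b + 1), (a.choose j * b.choose j * j ! : R) * w ^ j =
      ∑ j ∈ range (m + 1), j ! * w ^ j *
        ((-1) ^ a * m.choose a * a.choose j * ((-1) ^ b * m.choose b * b.choose j)) := by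
    rw [mul_sum, sum_subset (range_subset_range.mpr (show b + 1 ≤ m + 1 by grind))
      fun j _ hj => by rw [Nat.choose_eq_zero_of_lt (n := b) (k := j) (by grind)]; simp]
    exact sum_congr rfl fun j _ => by ring
  rw [sum_congr rfl fun a _ => sum_congr rfl (hext a)]
  calc _ = ∑ j ∈ range (m + 1), j ! * w ^ j *
        ((∑ a ∈ range (m + 1), (-1 : R) ^ a * m.choose a * a.choose j) *
          ∑ b ∈ range (m + 1), (-1 : R) ^ b * m.choose b * b.choose j) := by
        simp_rw [sum_mul_sum, mul_sum]
        conv_rhs => rw [sum_comm]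
        exact sum_congr rfl fun _ _ => sum_comm
    _ = m ! * w ^ m := by
        simp only [alternating_sum_range_choose_mul_choose]
        rw [sum_eq_single_of_mem m (self_mem_range_succ m) fun j _ hj => by simp [hj]]
        simp [← pow_add, ← two_mul, pow_mul]

theorem hasSum_descFactorial_mul_pow_div_factorial (r : ℕ) (z : ℝ) :
    HasSum (fun k : ℕ => (k.descFactorial r : ℝ) * z ^ k / k !) (z ^ r * Real.exp z) := by
  refine (hasSum_nat_add_iff' r).mp ?_
  rw [sum_eq_zero fun i hi => by simp [Nat.descFactorial_of_lt (mem_range.mp hi)], sub_zero,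
    Real.exp_eq_exp_ℝ]
  refine ((NormedSpace.expSeries_div_hasSum_exp z).mul_left (z ^ r)).congr_fun fun i => ?_
  have h : (i + r)! = (i + r).descFactorial r * i ! := by
    rw [mul_comm, ← Nat.factorial_mul_descFactorial (Nat.le_add_left r i), Nat.add_sub_cancel]
  rw [h, Nat.cast_mul, pow_add]
  field_simp

theorem hasSum_descFactorial_mul_descFactorial (a b : ℕ) {z : ℝ} (hz : z ≠ 0) :
    HasSum (fun k : ℕ => (k.descFactorial a * k.descFactorial b : ℝ) * z ^ k / k !)
      (z ^ a * z ^ b * Real.exp z *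
        ∑ j ∈ range (b + 1), (a.choose j * b.choose j * j ! : ℝ) * z⁻¹ ^ j) := by
  have hpow : ∀ j ∈ range (b + 1),
      (a.choose j * b.choose j * j ! : ℝ) * (z ^ (a + b - j) * Real.exp z) =
        z ^ a * z ^ b * Real.exp z * ((a.choose j * b.choose j * j ! : ℝ) * z⁻¹ ^ j) :=
    fun j hj => by
      rw [pow_sub₀ z hz (by grind), pow_add, inv_pow]
      ring
  rw [mul_sum, ← sum_congr rfl hpow]
  refine (hasSum_sum fun j _ => (hasSum_descFactorial_mul_pow_div_factorial (a + b - j) z).mul_left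
    (a.choose j * b.choose j * j ! : ℝ)).congr_fun fun k => ?_
  rw [← Nat.cast_mul, Nat.descFactorial_mul_descFactorial_eq_sum]
  push_cast
  rw [sum_mul, sum_div]
  exact sum_congr rfl fun j _ => by ring

/-- `z ^ k * C_m(k; z)`, where `C_m(x; a) = Σ_j C(m,j) (x)_j (-1/a)^j` is the Charlier
polynomial. -/
def charlier {R : Type*} [CommRing R] (k m : ℕ) (z : R) : R :=
  ∑ a ∈ range (m + 1), (-1) ^ a * m.choose a * k.descFactorial a * z ^ (k - a)

@[simp, norm_cast]
theorem Complex.ofReal_charlier (k m : ℕ) (z : ℝ) :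
    ((charlier k m z : ℝ) : ℂ) = charlier k m (z : ℂ) := by
  simp [charlier]

theorem charlier_eq_sum_range_choose {R : Type*} [CommRing R] {k m : ℕ} (hmk : m ≤ k) (z : R) :
    charlier k m z =
      ∑ a ∈ range (k + 1), (-1) ^ a * k.choose a * m.descFactorial a * z ^ (k - a) := by
  rw [charlier, sum_subset (range_subset_range.mpr (show m + 1 ≤ k + 1 by omega))
    fun a _ ha => by rw [Nat.choose_eq_zero_of_lt (n := m) (by grind)]; simp]
  refine sum_congr rfl fun a _ => ?_
  have hswap : m.choose a * k.descFactorial a = k.choose a * m.descFactorial a := by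
    rw [Nat.descFactorial_eq_factorial_mul_choose, Nat.descFactorial_eq_factorial_mul_choose]
    ring
  rw [mul_assoc _ (m.choose a : R), ← Nat.cast_mul, hswap, Nat.cast_mul]
  ring

theorem charlier_eq_pow_mul {K : Type*} [Field K] (k m : ℕ) {z : K} (hz : z ≠ 0) :
    charlier k m z =
      z ^ k * ∑ a ∈ range (m + 1), (-1) ^ a * m.choose a * k.descFactorial a * z⁻¹ ^ a := by
  rw [charlier, mul_sum]
  refine sum_congr rfl fun a _ => ?_
  rcases le_or_gt a k with hak | hka
  · rw [pow_sub₀ z hz hak, inv_pow]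
    ring
  · simp [Nat.descFactorial_of_lt hka]

theorem hasSum_charlier_sq (m : ℕ) {z : ℝ} (hz : z ≠ 0) :
    HasSum (fun k => charlier k m z ^ 2 / (k ! * z ^ k)) (Real.exp z * m ! * z⁻¹ ^ m) := by
  set c : ℕ → ℝ := fun a => (-1) ^ a * m.choose a * z⁻¹ ^ a
  have hterm (k : ℕ) : charlier k m z ^ 2 / (k ! * z ^ k) = ∑ a ∈ range (m + 1),
      ∑ b ∈ range (m + 1),
        c a * c b * ((k.descFactorial a * k.descFactorial b : ℝ) * z ^ k / k !) := by
    rw [charlier_eq_pow_mul k m hz, mul_pow, sq (∑ _ ∈ _, _), sum_mul_sum, mul_sum, sum_div]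
    refine sum_congr rfl fun a _ => ?_
    rw [mul_sum, sum_div]
    refine sum_congr rfl fun b _ => ?_
    simp only [c]
    field_simp
  have hval : ∑ a ∈ range (m + 1), ∑ b ∈ range (m + 1), c a * c b *
        (z ^ a * z ^ b * Real.exp z *
          ∑ j ∈ range (b + 1), (a.choose j * b.choose j * j ! : ℝ) * z⁻¹ ^ j) =
      Real.exp z * m ! * z⁻¹ ^ m := by
    have hc (a : ℕ) : c a * z ^ a = (-1) ^ a * m.choose a := by
      simp only [c]
      rw [mul_assoc, ← mul_pow, inv_mul_cancel₀ hz, one_pow, mul_one]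
    rw [mul_assoc, ← sum_sum_alternating_choose_mul_sum_choose_mul_choose m z⁻¹, mul_sum]
    refine sum_congr rfl fun a _ => ?_
    rw [mul_sum]
    refine sum_congr rfl fun b _ => ?_
    rw [← hc a, ← hc b]
    ring
  rw [← hval]
  exact (hasSum_sum fun a _ => hasSum_sum fun b _ =>
    (hasSum_descFactorial_mul_descFactorial a b hz).mul_left (c a * c b)).congr_fun hterm

theorem charlier_sq_le {k m : ℕ} (hmk : m ≤ k) {z : ℝ} (hz : 0 ≤ z) :
    charlier k m z ^ 2 ≤ k ! * m ! * z ^ (k - m) * Real.exp z := by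
  suffices Set.Ioi 0 ⊆ {z : ℝ | charlier k m z ^ 2 ≤ k ! * m ! * z ^ (k - m) * Real.exp z} from
    closure_minimal this (isClosed_le (by unfold charlier; fun_prop) (by fun_prop))
      (closure_Ioi (0 : ℝ) ▸ hz)
  intro y (hy : 0 < y)
  have hle := le_hasSum (hasSum_charlier_sq m hy.ne') k fun _ _ => by positivity
  rw [div_le_iff₀ (by positivity)] at hle
  calc charlier k m y ^ 2 ≤ Real.exp y * m ! * y⁻¹ ^ m * (k ! * y ^ k) := hle
    _ = k ! * m ! * y ^ (k - m) * Real.exp y := by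
      rw [← Nat.sub_add_cancel hmk, pow_add, Nat.add_sub_cancel, inv_pow]
      field_simp

theorem choose_mul_descFactorial_mul_charlier_sq_le {n p s : ℕ} (hpn : p ≤ n) (hsn : s ≤ n)
    {z : ℝ} (hz : 0 ≤ z) :
    n.choose s * p.descFactorial s * charlier (n - s) (p - s) z ^ 2 ≤
      n ! * p ! / s ! * (z ^ (n - p) * Real.exp z) := by
  rcases lt_or_ge p s with hps | hsp
  · rw [Nat.descFactorial_of_lt hps, Nat.cast_zero, mul_zero, zero_mul]
    positivity
  have hfact : (n.choose s * p.descFactorial s * ((n - s)! * (p - s)!) : ℝ) = n ! * p ! / s ! := by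
    rw [eq_div_iff (by positivity)]
    norm_cast
    rw [← Nat.choose_mul_factorial_mul_factorial hsn, ← Nat.factorial_mul_descFactorial hsp]
    ring
  calc _ ≤ n.choose s * p.descFactorial s *
        ((n - s)! * (p - s)! * z ^ (n - s - (p - s)) * Real.exp z) := by
        gcongr
        exact charlier_sq_le (by omega) hz
    _ = _ := by
        rw [← hfact, show n - s - (p - s) = n - p by omega]
        ring

namespace R1

def weight (n p s j : ℕ) (z : ℂ) : ℂ :=
  (-1) ^ j * (p - s).descFactorial (j - s) * z ^ (n - j)

theorem summand_eq (n p : ℕ) (J₁ J₂ : Finset (Fin n)) (z : ℂ) :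
    (-1 : ℂ) ^ (#J₁ + #J₂) *
        (Nat.card { τ : ({ x // x ∈ J₁ } ↪ Fin p) × ({ x // x ∈ J₂ } ↪ Fin p) //
          ∀ (j₁ : { x // x ∈ J₁ }) (j₂ : { x // x ∈ J₂ }),
            (j₁ : Fin n) = (j₂ : Fin n) → τ.1 j₁ ≠ τ.2 j₂ } : ℂ) * z ^ (2 * n - #J₁ - #J₂) =
      ∑ S ∈ (J₁ ∩ J₂).powerset, (-1) ^ #S * p.descFactorial #S *
        (weight n p #S #J₁ z * weight n p #S #J₂ z) := by
  have hcard := congrArg (Int.cast : ℤ → ℂ) (card_embedding_pairs_disagreeing (β := Fin p) J₁ J₂)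
  push_cast at hcard
  rw [hcard, Fintype.card_fin, mul_sum, sum_mul]
  refine sum_congr rfl fun S hS => ?_
  have hS₁ : #S ≤ #J₁ := card_le_card ((mem_powerset.mp hS).trans inter_subset_left)
  have hsplit : (p.descFactorial #J₁ : ℂ) =
      p.descFactorial #S * (p - #S).descFactorial (#J₁ - #S) := by
    rw [← Nat.cast_mul, mul_comm, Nat.descFactorial_mul_descFactorial hS₁]
  have hpow : z ^ (2 * n - #J₁ - #J₂) = z ^ (n - #J₁) * z ^ (n - #J₂) := by
    rw [← pow_add]
    congr 1
    have h₁ : #J₁ ≤ n := by simpa using card_le_univ J₁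
    have h₂ : #J₂ ≤ n := by simpa using card_le_univ J₂
    omega
  rw [hsplit, hpow, weight, weight, pow_add]
  ring

theorem sum_superset_weight (n p : ℕ) (hpn : p ≤ n) (S : Finset (Fin n)) (z : ℂ) :
    ∑ J with S ⊆ J, weight n p #S #J z = (-1) ^ #S * charlier (n - #S) (p - #S) z := by
  rw [sum_superset_apply_card S fun j => weight n p #S j z, Fintype.card_fin,
    charlier_eq_sum_range_choose (by omega), mul_sum]
  refine sum_congr rfl fun k _ => ?_
  rw [weight, Nat.add_sub_cancel_left, nsmul_eq_mul, pow_add,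
    show n - (#S + k) = n - #S - k by omega]
  ring

theorem eq_sum_charlier (n p : ℕ) (hpn : p ≤ n) (z : ℂ) :
    R1 n p z = ∑ s ∈ range (n + 1),
      (-1) ^ s * (n.choose s * p.descFactorial s * charlier (n - s) (p - s) z ^ 2) := by
  calc R1 n p z = ∑ J₁, ∑ J₂, ∑ S ∈ (J₁ ∩ J₂).powerset, (-1) ^ #S * p.descFactorial #S *
        (weight n p #S #J₁ z * weight n p #S #J₂ z) :=
        sum_congr rfl fun J₁ _ => sum_congr rfl fun J₂ _ => summand_eq n p J₁ J₂ z
    _ = ∑ S : Finset (Fin n), (-1) ^ #S * p.descFactorial #S *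
          (∑ J with S ⊆ J, weight n p #S #J z) ^ 2 := sum_sum_sum_powerset_inter _ _
    _ = ∑ S : Finset (Fin n), (-1) ^ #S *
          (p.descFactorial #S * charlier (n - #S) (p - #S) z ^ 2) := by
        refine sum_congr rfl fun S _ => ?_
        rw [sum_superset_weight n p hpn, mul_pow, ← pow_mul, pow_mul', neg_one_sq, one_pow]
        ring
    _ = _ := by
        rw [← powerset_univ, sum_powerset_apply_card fun s =>
          (-1 : ℂ) ^ s * (p.descFactorial s * charlier (n - s) (p - s) z ^ 2), card_univ,
          Fintype.card_fin]
        exact sum_congr rfl fun s _ => by rw [nsmul_eq_mul]; ring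

theorem norm_le (n p : ℕ) (hpn : p ≤ n) {z : ℝ} (hz : 0 ≤ z) :
    ‖R1 n p z‖ ≤ Real.exp 1 * (n ! * p ! * z ^ (n - p) * Real.exp z) := by
  set T : ℕ → ℝ := fun s => n.choose s * p.descFactorial s * charlier (n - s) (p - s) z ^ 2
  have hR1 : R1 n p z = ((∑ s ∈ range (n + 1), (-1) ^ s * T s : ℝ) : ℂ) := by
    rw [eq_sum_charlier n p hpn]
    push_cast [T]
    rfl
  have hexp : ∑ s ∈ range (n + 1), (1 / s ! : ℝ) ≤ Real.exp 1 := by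
    simpa using Real.sum_le_exp_of_nonneg zero_le_one (n + 1)
  calc ‖R1 n p z‖ = |∑ s ∈ range (n + 1), (-1) ^ s * T s| := by
        rw [hR1, Complex.norm_real, Real.norm_eq_abs]
    _ ≤ ∑ s ∈ range (n + 1), T s := (abs_sum_le_sum_abs _ _).trans_eq <|
        sum_congr rfl fun s _ => by simp [T, abs_mul, abs_of_nonneg]
    _ ≤ ∑ s ∈ range (n + 1), n ! * p ! / s ! * (z ^ (n - p) * Real.exp z) :=
        sum_le_sum fun s hs => choose_mul_descFactorial_mul_charlier_sq_le hpn
          (Nat.lt_succ_iff.mp (mem_range.mp hs)) hz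
    _ = (∑ s ∈ range (n + 1), (1 / s ! : ℝ)) * (n ! * p ! * z ^ (n - p) * Real.exp z) := by
        rw [sum_mul]
        exact sum_congr rfl fun s _ => by ring
    _ ≤ Real.exp 1 * (n ! * p ! * z ^ (n - p) * Real.exp z) := by gcongr

end R1

/-- There is a universal constant `c > 0` such that for all integers `n ≥ 1`,
`0 ≤ p ≤ n` and every real `z ≥ 0`,
`|R¹(n,p,z)| ≤ c (p+1)³ n! p! z^{n-p} e^z`. -/
theorem abs_R1_le :
    ∃ c : ℝ, 0 < c ∧ ∀ (n p : ℕ), 1 ≤ n → p ≤ n → ∀ z : ℝ, 0 ≤ z →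
      ‖R1 n p (z : ℂ)‖ ≤
        c * ((p : ℝ) + 1) ^ 3 * n.factorial * p.factorial * z ^ (n - p) * Real.exp z := by
  refine ⟨Real.exp 1, Real.exp_pos 1, fun n p _ hpn z hz => (R1.norm_le n p hpn hz).trans ?_⟩
  have hp : (1 : ℝ) ≤ ((p : ℝ) + 1) ^ 3 := one_le_pow₀ (by linarith [p.cast_nonneg (α := ℝ)])
  calc _ = Real.exp 1 * 1 * n ! * p ! * z ^ (n - p) * Real.exp z := by ring
    _ ≤ _ := by gcongr
end

section
/- Let 1 ≤ p ≤ n be integers and let M = (t_{ij}) be a random complex p×n matrix whose entries are independent random variables with E(t_{ij}) = 0, E(|t_{ij}|²) = 1 and finite fourth moments. Let J₁, J₂ ⊆ {1,…,n} be sets of cardinality at most p and let σ₁ be a permutation of J₁ and σ₂ a permutation of J₂. If σ₁ contains a cycle l of length at least 2 such that neither l nor l^{-1} is a cycle of σ₂, then E(ξ*_{σ₁} · conj(ξ*_{σ₂})) = 0. -/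
open MeasureTheory ProbabilityTheory Matrix
open scoped ENNReal

/-!
Expanding the product, `E(ξ*_{σ₁} conj ξ*_{σ₂})` is a sum over pairs `(τ₁, τ₂)` of expectations
of monomials in the independent entries `t_e` and their conjugates. Such an expectation factors
over the entries, so it vanishes as soon as one entry occurs exactly once, its factor being
`E t_e = 0` or its conjugate. Each entry occurs at most four times, which is where the fourth
moments give integrability. Since `τ₁` is injective, the row `τ₁ j` of a point `j` moved by `l`
carries exactly the two occurrences `(τ₁ j, j)` and `(τ₁ j, l j)` from the first factor. If no
entry occurred exactly once, the second factor would have to cover both, forcing `σ₂ j = l j` or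
`σ₂ (l j) = j`; injectivity of `τ₁` propagates the same alternative along the cycle, so `l` or
`l⁻¹` would be a cycle of `σ₂`.
-/

open Finset Equiv

theorem Finset.prod_comp_eq_prod_univ_pow {ι κ M : Type*} [Fintype κ] [DecidableEq κ]
    [CommMonoid M] (s : Finset ι) (f : κ → M) (g : ι → κ) :
    ∏ a ∈ s, f (g a) = ∏ b, f b ^ #{a ∈ s | g a = b} := by
  rw [prod_comp]
  refine prod_subset (subset_univ _) fun b _ hb ↦ ?_
  rw [card_eq_zero.mpr (filter_eq_empty_iff.mpr fun a ha hab ↦ hb (mem_image.mpr ⟨a, ha, hab⟩)),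
    pow_zero]

namespace Equiv.Perm

variable {α : Type*} [Fintype α] [DecidableEq α] {l σ : Perm α}

theorem IsCycle.forall_mem_support_of_apply (hl : l.IsCycle) {P : α → Prop}
    (hP : ∀ j ∈ l.support, P j → P (l j)) {x : α} (hx : x ∈ l.support) (hPx : P x) :
    ∀ y ∈ l.support, P y := by
  have hmaps : Set.MapsTo l {j | j ∈ l.support ∧ P j} {j | j ∈ l.support ∧ P j} :=
    fun j hj ↦ ⟨apply_mem_support.mpr hj.1, hP j hj.1 hj.2⟩
  intro y hy
  obtain ⟨k, rfl⟩ := (hl.sameCycle (mem_support.mp hx) (mem_support.mp hy)).exists_nat_pow_eq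
  rw [coe_pow]
  exact (hmaps.iterate k ⟨hx, hPx⟩).2

theorem mem_cycleFactorsFinset_of_forall_mem_support (hl : l.IsCycle)
    (h : ∀ j ∈ l.support, σ j = l j) : l ∈ σ.cycleFactorsFinset :=
  mem_cycleFactorsFinset_iff.mpr ⟨hl, fun j hj ↦ (h j hj).symm⟩

theorem inv_mem_cycleFactorsFinset_of_forall_mem_support (hl : l.IsCycle)
    (h : ∀ j ∈ l.support, σ (l j) = j) : l⁻¹ ∈ σ.cycleFactorsFinset := by
  refine mem_cycleFactorsFinset_iff.mpr ⟨hl.inv, fun j hj ↦ ?_⟩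
  have hj' : l⁻¹ j ∈ l.support := by rwa [← support_inv, apply_mem_support]
  simpa using (h _ hj').symm

/-- Since `R m` relates `m` to at most one point, neither alternative in `h` can switch to the
other from `j` to `l j`, so one of them holds along the whole cycle. -/
theorem IsCycle.mem_cycleFactorsFinset_or_inv (hl : l.IsCycle) (R : α → α → Prop)
    (hR : ∀ m j j', R m j → R m j' → j = j')
    (h : ∀ j ∈ l.support, (R j j ∧ σ j = l j) ∨ (R (l j) j ∧ σ (l j) = j)) :
    l ∈ σ.cycleFactorsFinset ∨ l⁻¹ ∈ σ.cycleFactorsFinset := by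
  obtain ⟨x, hx, -⟩ := id hl
  have hxs : x ∈ l.support := mem_support.mpr hx
  have hne : ∀ j ∈ l.support, l j ≠ j := fun j hj ↦ mem_support.mp hj
  rcases h x hxs with hPx | hQx
  · left
    refine mem_cycleFactorsFinset_of_forall_mem_support hl fun y hy ↦
      (hl.forall_mem_support_of_apply (P := fun j ↦ R j j ∧ σ j = l j) ?_ hxs hPx y hy).2
    rintro j hj ⟨hRj, hσj⟩
    refine (h (l j) (apply_mem_support.mpr hj)).resolve_right fun ⟨hRlj, hσlj⟩ ↦ hne j hj ?_
    have hjj : j = l (l j) := σ.injective (hσj.trans hσlj.symm)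
    rw [← hjj] at hRlj
    exact (hR j _ _ hRj hRlj).symm
  · right
    refine inv_mem_cycleFactorsFinset_of_forall_mem_support hl fun y hy ↦
      (hl.forall_mem_support_of_apply (P := fun j ↦ R (l j) j ∧ σ (l j) = j) ?_ hxs hQx y hy).2
    rintro j hj ⟨hRj, -⟩
    exact (h (l j) (apply_mem_support.mpr hj)).resolve_left fun hP ↦
      hne j hj (hR _ _ _ hP.1 hRj)

end Equiv.Perm

section PositionCount

variable {α β γ : Type*} [Fintype α] [DecidableEq β] [DecidableEq γ]

def posCount (τ : α ↪ β) (g : α → γ) (e : β × γ) : ℕ := #{a | (τ a, g a) = e}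

theorem posCount_apply_left (τ : α ↪ β) (g : α → γ) (a : α) (c : γ) :
    posCount τ g (τ a, c) = if g a = c then 1 else 0 := by
  have hmem (a' : α) : (τ a', g a') = (τ a, c) ↔ a' = a ∧ g a = c := by
    rw [Prod.ext_iff, τ.injective.eq_iff]
    grind
  split_ifs with h
  · exact card_eq_one.mpr ⟨a, by ext; simp [hmem, h]⟩
  · exact card_eq_zero.mpr (filter_eq_empty_iff.mpr fun a' _ he ↦ h ((hmem a').mp he).2)

theorem posCount_le_one (τ : α ↪ β) (g : α → γ) (e : β × γ) : posCount τ g e ≤ 1 :=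
  card_le_one.mpr fun _ ha _ hb ↦ τ.injective <|
    (congrArg Prod.fst (mem_filter.mp ha).2).trans (congrArg Prod.fst (mem_filter.mp hb).2).symm

theorem posCount_ne_zero_iff {τ : α ↪ β} {g : α → γ} {e : β × γ} :
    posCount τ g e ≠ 0 ↔ ∃ a, τ a = e.1 ∧ g a = e.2 := by
  simp [posCount, Prod.ext_iff]

end PositionCount

section EntryCount

variable {α β : Type*} [DecidableEq α] [DecidableEq β] {J₁ J₂ : Finset α}
  {τ₁ : J₁ ↪ β} {τ₂ : J₂ ↪ β} {σ₁ σ₂ : Perm α}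

def plainCount (τ₁ : J₁ ↪ β) (τ₂ : J₂ ↪ β) (σ₁ : Perm α) (e : β × α) : ℕ :=
  posCount τ₁ (σ₁ ·) e + posCount τ₂ (↑) e

def conjCount (τ₁ : J₁ ↪ β) (τ₂ : J₂ ↪ β) (σ₂ : Perm α) (e : β × α) : ℕ :=
  posCount τ₁ (↑) e + posCount τ₂ (σ₂ ·) e

theorem plainCount_add_conjCount_le_four (e : β × α) :
    plainCount τ₁ τ₂ σ₁ e + conjCount τ₁ τ₂ σ₂ e ≤ 4 := by
  have := posCount_le_one τ₁ (↑) e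
  have := posCount_le_one τ₁ (σ₁ ·) e
  have := posCount_le_one τ₂ (↑) e
  have := posCount_le_one τ₂ (σ₂ ·) e
  unfold plainCount conjCount
  omega

theorem exists_rowmate (hmult : ∀ e, plainCount τ₁ τ₂ σ₁ e + conjCount τ₁ τ₂ σ₂ e ≠ 1)
    {e : β × α} (he : posCount τ₁ (↑) e + posCount τ₁ (σ₁ ·) e = 1) :
    ∃ m : J₂, τ₂ m = e.1 ∧ ((m : α) = e.2 ∨ σ₂ m = e.2) := by
  have h := hmult e
  unfold plainCount conjCount at h
  obtain h | h : posCount τ₂ (↑) e ≠ 0 ∨ posCount τ₂ (σ₂ ·) e ≠ 0 := by omega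
  · obtain ⟨m, hm, hme⟩ := posCount_ne_zero_iff.mp h
    exact ⟨m, hm, .inl hme⟩
  · obtain ⟨m, hm, hme⟩ := posCount_ne_zero_iff.mp h
    exact ⟨m, hm, .inr hme⟩

theorem exists_rowmate_of_apply_ne
    (hmult : ∀ e, plainCount τ₁ τ₂ σ₁ e + conjCount τ₁ τ₂ σ₂ e ≠ 1) (j : J₁) (hj : σ₁ j ≠ j) :
    ∃ m : J₂, τ₂ m = τ₁ j ∧ (((m : α) = j ∧ σ₂ m = σ₁ j) ∨ ((m : α) = σ₁ j ∧ σ₂ m = j)) := by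
  obtain ⟨m, hm, hmj⟩ := exists_rowmate hmult (e := (τ₁ j, j))
    (by simp [posCount_apply_left, hj])
  obtain ⟨m', hm', hm'j⟩ := exists_rowmate hmult (e := (τ₁ j, σ₁ j))
    (by simp [posCount_apply_left, hj.symm])
  obtain rfl : m' = m := τ₂.injective (hm'.trans hm.symm)
  refine ⟨m', hm, ?_⟩
  grind

theorem exists_plainCount_add_conjCount_eq_one [Fintype α] (hσ₁ : ∀ j ∉ J₁, σ₁ j = j)
    {l : Perm α} (hl : l ∈ σ₁.cycleFactorsFinset) (hl₂ : l ∉ σ₂.cycleFactorsFinset)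
    (hl₂' : l⁻¹ ∉ σ₂.cycleFactorsFinset) :
    ∃ e, plainCount τ₁ τ₂ σ₁ e + conjCount τ₁ τ₂ σ₂ e = 1 := by
  by_contra! hmult
  obtain ⟨hcyc, hlσ₁⟩ := Perm.mem_cycleFactorsFinset_iff.mp hl
  have hJ₁ : ∀ j ∈ l.support, j ∈ J₁ := fun j hj ↦ by_contra fun h ↦
    Perm.mem_support.mp hj ((hlσ₁ j hj).trans (hσ₁ j h))
  -- `R m j`: column `m` of the second factor lies in the same row as column `j` of the first.
  refine (hcyc.mem_cycleFactorsFinset_or_inv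
    (fun m j ↦ ∃ (hm : m ∈ J₂) (hj : j ∈ J₁), τ₂ ⟨m, hm⟩ = τ₁ ⟨j, hj⟩) ?_ ?_).elim hl₂ hl₂'
  · rintro m j j' ⟨_, _, h⟩ ⟨_, _, h'⟩
    exact congrArg Subtype.val (τ₁.injective (h.symm.trans h'))
  · intro j hj
    obtain ⟨⟨m, hmJ₂⟩, hm, hcases⟩ := exists_rowmate_of_apply_ne hmult ⟨j, hJ₁ j hj⟩
      (by simpa [← hlσ₁ j hj] using Perm.mem_support.mp hj)
    simp only [← hlσ₁ j hj] at hcases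
    rcases hcases with ⟨rfl, h⟩ | ⟨rfl, h⟩
    exacts [.inl ⟨⟨hmJ₂, hJ₁ _ hj, hm⟩, h⟩, .inr ⟨⟨hmJ₂, hJ₁ j hj, hm⟩, h⟩]

end EntryCount

section Moments

variable {Ω ι 𝓧 𝕜 : Type*} [MeasurableSpace Ω] {μ : Measure Ω} [Fintype ι] [MeasurableSpace 𝓧]
  [RCLike 𝕜]

theorem ProbabilityTheory.iIndepFun.integrable_fun_prod_comp {X : ι → Ω → 𝓧} {f : ι → 𝓧 → 𝕜}
    (hX : iIndepFun X μ) (mX : ∀ i, AEMeasurable (X i) μ)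
    (hf : ∀ i, Integrable (f i) (μ.map (X i))) :
    Integrable (fun ω ↦ ∏ i, f i (X i ω)) μ := by
  have := hX.isProbabilityMeasure
  have mφ : AEMeasurable (fun ω i ↦ X i ω) μ := by fun_prop
  have hF : Integrable (fun x : ι → 𝓧 ↦ ∏ i, f i (x i)) (μ.map fun ω i ↦ X i ω) := by
    rw [hX.map_fun_eq_pi_map mX]
    exact Integrable.fintype_prod hf
  exact (integrable_map_measure hF.aestronglyMeasurable mφ).mp hF

def conjMonomial (a b : ℕ) (z : 𝕜) : 𝕜 := z ^ a * starRingEnd 𝕜 z ^ b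

theorem continuous_conjMonomial (a b : ℕ) : Continuous (conjMonomial (𝕜 := 𝕜) a b) :=
  (continuous_pow a).mul (RCLike.continuous_conj.pow b)

theorem norm_conjMonomial (a b : ℕ) (z : 𝕜) : ‖conjMonomial a b z‖ = ‖z‖ ^ (a + b) := by
  rw [conjMonomial, norm_mul, norm_pow, norm_pow, RCLike.norm_conj, pow_add]

theorem conj_conjMonomial (a b : ℕ) (z : 𝕜) :
    starRingEnd 𝕜 (conjMonomial a b z) = conjMonomial b a z := by
  simp only [conjMonomial, map_mul, map_pow, RCLike.conj_conj, mul_comm]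

theorem conjMonomial_mul_conjMonomial (a b c d : ℕ) (z : 𝕜) :
    conjMonomial a b z * conjMonomial c d z = conjMonomial (a + c) (b + d) z := by
  simp only [conjMonomial, pow_add]
  ring

theorem integrable_conjMonomial_comp [IsFiniteMeasure μ] {Y : Ω → 𝕜} (hY : MemLp Y 4 μ)
    {a b : ℕ} (hab : a + b ≤ 4) : Integrable (fun ω ↦ conjMonomial a b (Y ω)) μ := by
  have hYab : MemLp Y (a + b : ℕ) μ := hY.mono_exponent (by exact_mod_cast hab)
  refine hYab.integrable_norm_pow'.mono'
    ((continuous_conjMonomial a b).comp_aestronglyMeasurable hY.1) (ae_of_all _ fun ω ↦ ?_)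
  rw [norm_conjMonomial]

theorem integral_conjMonomial_comp_eq_zero {Y : Ω → 𝕜} (hY : ∫ ω, Y ω ∂μ = 0)
    {a b : ℕ} (hab : a + b = 1) : ∫ ω, conjMonomial a b (Y ω) ∂μ = 0 := by
  obtain ⟨rfl, rfl⟩ | ⟨rfl, rfl⟩ : (a = 1 ∧ b = 0) ∨ (a = 0 ∧ b = 1) := by omega
  · simpa [conjMonomial] using hY
  · simp [conjMonomial, integral_conj, hY]

theorem integrable_prod_conjMonomial {X : ι → Ω → 𝕜} (hX : iIndepFun X μ)
    (h4 : ∀ i, MemLp (X i) 4 μ) {a b : ι → ℕ} (hab : ∀ i, a i + b i ≤ 4) :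
    Integrable (fun ω ↦ ∏ i, conjMonomial (a i) (b i) (X i ω)) μ := by
  have := hX.isProbabilityMeasure
  refine hX.integrable_fun_prod_comp (fun i ↦ (h4 i).1.aemeasurable) fun i ↦ ?_
  exact (integrable_map_measure (continuous_conjMonomial _ _).aestronglyMeasurable
    (h4 i).1.aemeasurable).mpr (integrable_conjMonomial_comp (h4 i) (hab i))

theorem integral_prod_conjMonomial_eq_zero {X : ι → Ω → 𝕜} (hX : iIndepFun X μ)
    (mX : ∀ i, AEMeasurable (X i) μ) (h0 : ∀ i, ∫ ω, X i ω ∂μ = 0) {a b : ι → ℕ}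
    {i₀ : ι} (hi₀ : a i₀ + b i₀ = 1) :
    ∫ ω, ∏ i, conjMonomial (a i) (b i) (X i ω) ∂μ = 0 := by
  rw [hX.integral_fun_prod_comp mX fun i ↦ (continuous_conjMonomial _ _).aestronglyMeasurable]
  exact prod_eq_zero (mem_univ i₀) (integral_conjMonomial_comp_eq_zero (h0 i₀) hi₀)

end Moments

section XiTerm

variable {α β 𝕜 : Type*} [Fintype α] [Fintype β] [DecidableEq α] [DecidableEq β] [RCLike 𝕜]

/-- The paper's `T(J,σ,τ)`. -/
def xiTerm (M : Matrix β α 𝕜) {J : Finset α} (τ : J ↪ β) (σ : Perm α) : 𝕜 :=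
  ∏ j, starRingEnd 𝕜 (M (τ j) j) * M (τ j) (σ j)

theorem xiStar_eq_sum_xiTerm {p n : ℕ} (M : Matrix (Fin p) (Fin n) ℂ) (J : Finset (Fin n))
    (σ : Perm (Fin n)) : xiStar M J σ = ∑ τ : J ↪ Fin p, xiTerm M τ σ :=
  rfl

theorem xiTerm_eq_prod (M : Matrix β α 𝕜) {J : Finset α} (τ : J ↪ β) (σ : Perm α) :
    xiTerm M τ σ = ∏ e, conjMonomial (posCount τ (σ ·) e) (posCount τ (↑) e) (M e.1 e.2) := by
  rw [xiTerm, prod_mul_distrib,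
    prod_comp_eq_prod_univ_pow univ (fun e ↦ starRingEnd 𝕜 (M e.1 e.2)) fun j ↦ (τ j, (j : α)),
    prod_comp_eq_prod_univ_pow univ (fun e ↦ M e.1 e.2) fun j ↦ (τ j, σ j), mul_comm,
    ← prod_mul_distrib]
  rfl

theorem xiTerm_mul_conj_xiTerm (M : Matrix β α 𝕜) {J₁ J₂ : Finset α} (τ₁ : J₁ ↪ β)
    (τ₂ : J₂ ↪ β) (σ₁ σ₂ : Perm α) :
    xiTerm M τ₁ σ₁ * starRingEnd 𝕜 (xiTerm M τ₂ σ₂) =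
      ∏ e, conjMonomial (plainCount τ₁ τ₂ σ₁ e) (conjCount τ₁ τ₂ σ₂ e) (M e.1 e.2) := by
  simp only [xiTerm_eq_prod, map_prod, conj_conjMonomial, ← prod_mul_distrib,
    conjMonomial_mul_conjMonomial, plainCount, conjCount]

end XiTerm

/-- Let `1 ≤ p ≤ n` and let `M` be a random complex `p×n` matrix with independent
entries of mean `0`, `E(|t_{ij}|²) = 1` and finite fourth moments.  Let
`J₁, J₂ ⊆ {1,…,n}` have cardinality at most `p` and let `σ₁, σ₂` be permutations of
`J₁, J₂` respectively (encoded as permutations of `{1,…,n}` fixing the complements).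
If `σ₁` contains a cycle `l` of length at least `2` such that neither `l` nor `l⁻¹`
is a cycle of `σ₂`, then `E(ξ*_{σ₁} conj(ξ*_{σ₂})) = 0`. -/
theorem expectation_xiStar_mul_conj_eq_zero (p n : ℕ)
    (Ω : Type) (_ : MeasureSpace Ω)
    (M : Ω → Matrix (Fin p) (Fin n) ℂ)
    (hindep : iIndepFun
      (fun (ij : Fin p × Fin n) ω => M ω ij.1 ij.2) (volume : Measure Ω))
    (hmean : ∀ i j, (∫ ω, M ω i j) = 0)
    (hmom4 : ∀ i j, MemLp (fun ω => M ω i j) 4 (volume : Measure Ω))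
    (J₁ J₂ : Finset (Fin n))
    (σ₁ σ₂ : Equiv.Perm (Fin n))
    (hσ₁ : ∀ j ∉ J₁, σ₁ j = j)
    (l : Equiv.Perm (Fin n)) (hl : l ∈ σ₁.cycleFactorsFinset)
    (hl₂ : l ∉ σ₂.cycleFactorsFinset) (hl₂' : l⁻¹ ∉ σ₂.cycleFactorsFinset) :
    (∫ ω, xiStar (M ω) J₁ σ₁ * (starRingEnd ℂ) (xiStar (M ω) J₂ σ₂)) = 0 := by
  have hterm (τ₁ : J₁ ↪ Fin p) (τ₂ : J₂ ↪ Fin p) :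
      (fun ω ↦ xiTerm (M ω) τ₁ σ₁ * starRingEnd ℂ (xiTerm (M ω) τ₂ σ₂)) = fun ω ↦
        ∏ e, conjMonomial (plainCount τ₁ τ₂ σ₁ e) (conjCount τ₁ τ₂ σ₂ e) (M ω e.1 e.2) :=
    funext fun ω ↦ xiTerm_mul_conj_xiTerm (M ω) τ₁ τ₂ σ₁ σ₂
  have hint (τ₁ : J₁ ↪ Fin p) (τ₂ : J₂ ↪ Fin p) :
      Integrable fun ω ↦ xiTerm (M ω) τ₁ σ₁ * starRingEnd ℂ (xiTerm (M ω) τ₂ σ₂) := by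
    rw [hterm]
    exact integrable_prod_conjMonomial hindep (fun e ↦ hmom4 e.1 e.2)
      plainCount_add_conjCount_le_four
  simp_rw [xiStar_eq_sum_xiTerm, map_sum, sum_mul_sum]
  rw [integral_finsetSum _ fun τ₁ _ ↦ integrable_finsetSum _ fun τ₂ _ ↦ hint τ₁ τ₂]
  refine sum_eq_zero fun τ₁ _ ↦ ?_
  rw [integral_finsetSum _ fun τ₂ _ ↦ hint τ₁ τ₂]
  refine sum_eq_zero fun τ₂ _ ↦ ?_
  obtain ⟨e, he⟩ := exists_plainCount_add_conjCount_eq_one (τ₁ := τ₁) (τ₂ := τ₂) hσ₁ hl hl₂ hl₂'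
  rw [hterm]
  exact integral_prod_conjMonomial_eq_zero hindep (fun e ↦ (hmom4 e.1 e.2).1.aemeasurable)
    (fun e ↦ hmean e.1 e.2) he
end
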